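/- Sweedler subword formula: for every parenthesized word X, the coproduct is the sum over subwords, Δ(X) = Σ_{U a subword of X} U ⊗ (X/U), where the sum ranges over all subwords U of X (including U = e, contributing e ⊗ X, and U = X, contributing X ⊗ e). -/

import Mathlib

open scoped TensorProduct

/-- Rooted trees with vertices labeled by letters `x_i` (`i : ℕ`): an irreducible
parenthesized word `(X x_i)` is a root labeled `x_i` with the forest `X` attached. -/
inductive PTree : Type
  | node : ℕ → List PTree → PTree

/-- Parenthesized words: finite commutative products (multisets) of irreducible words. -/
abbrev Word : Type := Multiset PTree

/-- The free ℚ-vector space `A` on parenthesized words, as a commutative unital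
associative ℚ-algebra (the product is induced by the product of words, the unit is the
empty word `e = word 0`). -/
abbrev A : Type := AddMonoidAlgebra ℚ Word

/-- The basis vector of `A` corresponding to a parenthesized word. -/
noncomputable def word (m : Word) : A := AddMonoidAlgebra.single m 1

/-- The grafting operator `B_{(x_i)}`, sending a word `X` to `(X x_i)`. -/
noncomputable def B (i : ℕ) : A →ₗ[ℚ] A :=
  AddMonoidAlgebra.mapDomainLinearMap ℚ ℚ (fun m : Word => ({PTree.node i m.toList} : Word))

/-- The counit `ē : A → ℚ`, killing every nonempty word and sending `e` to `1`. -/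
noncomputable def ebar : A →ₗ[ℚ] ℚ :=
  (Finsupp.lapply 0).comp (AddMonoidAlgebra.coeffLinearEquiv ℚ).toLinearMap

/-- The unit map `E : ℚ → A`, `q ↦ q • e`. -/
noncomputable def Eu : ℚ →ₗ[ℚ] A := AddMonoidAlgebra.lsingle 0

/-- The projection `P₁ = id_A − E ∘ ē`. -/
noncomputable def P1 : A →ₗ[ℚ] A := LinearMap.id - Eu.comp ebar

open scoped Classical

mutual
/-- All ways of choosing a subword `U` of the irreducible word given by a tree,
as pairs `(U, X/U)` counted with multiplicity (including `U = e` and `U = X`). -/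
noncomputable def cutsTree : PTree → Multiset (Word × Word)
  | .node i l =>
      (({PTree.node i l} : Word), (0 : Word)) ::ₘ
        ((0 : Word), ({PTree.node i l} : Word)) ::ₘ
          ((cutsForest l).filter (fun p => p.1 ≠ 0)).map
            (fun p => (p.1, ({PTree.node i p.2.toList} : Word)))
/-- All ways of choosing a subword of a forest (list of trees). -/
noncomputable def cutsForest : List PTree → Multiset (Word × Word)
  | [] => {((0 : Word), (0 : Word))}
  | t :: ts =>
      (cutsTree t).bind fun p => (cutsForest ts).map fun q => (p.1 + q.1, p.2 + q.2)
end

/-- All ways of choosing a subword `U` of a parenthesized word `X`,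
as pairs `(U, X/U)`, counted with multiplicity. -/
noncomputable def cutsW (m : Word) : Multiset (Word × Word) := cutsForest m.toList


mutual
/-- Size of a tree (auxiliary, for induction). -/
def sizeT : PTree → ℕ
  | .node _ l => sizeF l + 1
/-- Size of a forest (auxiliary, for induction). -/
def sizeF : List PTree → ℕ
  | [] => 0
  | t :: ts => sizeT t + sizeF ts
end

lemma one_le_sizeT (t : PTree) : 1 ≤ sizeT t := by
  cases t with
  | node i l => rw [sizeT]; omega

lemma word_mul (X Y : Word) : word X * word Y = word (X + Y) := by
  have := AddMonoidAlgebra.single_mul_single (R := ℚ) (M := Word)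
    (m₁ := X) (m₂ := Y) (r₁ := 1) (r₂ := 1)
  simpa [word] using this

lemma B_word (i : ℕ) (m : Word) : B i (word m) = word {PTree.node i m.toList} := by
  rw [B, word, AddMonoidAlgebra.mapDomainLinearMap_single]
  rfl

lemma P1_word (m : Word) : P1 (word m) = if m = 0 then 0 else word m := by
  by_cases h : m = 0
  · subst h; simp [P1, ebar, Eu, word]
  · simp [P1, ebar, Eu, word, h, Ne.symm h]

lemma msum_mul_msum {α β R : Type*} [NonUnitalNonAssocSemiring R]
    (s : Multiset α) (t : Multiset β) (f : α → R) (g : β → R) :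
    (s.map f).sum * (t.map g).sum = (s.bind fun p => t.map fun q => f p * g q).sum := by
  induction s using Multiset.induction with
  | empty => simp
  | cons a s ih =>
    simp only [Multiset.map_cons, Multiset.sum_cons, Multiset.cons_bind, add_mul, ih,
      Multiset.sum_add]
    congr 1
    rw [Multiset.sum_map_mul_left]

lemma msum_filter {α M : Type*} [AddCommMonoid M] (s : Multiset α) (pred : α → Prop)
    [DecidablePred pred] (f : α → M) (h : ∀ a ∈ s, ¬ pred a → f a = 0) :
    (s.map f).sum = ((s.filter pred).map f).sum := by
  conv_lhs => rw [← Multiset.filter_add_not pred s]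
  rw [Multiset.map_add, Multiset.sum_add]
  have hz : (Multiset.map f (Multiset.filter (fun a => ¬pred a) s)).sum = 0 := by
    apply Multiset.sum_eq_zero
    intro x hx
    obtain ⟨a, ha, rfl⟩ := Multiset.mem_map.mp hx
    obtain ⟨h1, h2⟩ := Multiset.mem_filter.mp ha
    exact h a h1 h2
  rw [hz, add_zero]

theorem sweedler_subword_formula
    (Δ : A →ₗ[ℚ] A ⊗[ℚ] A)
    (hΔe : Δ (word 0) = word 0 ⊗ₜ[ℚ] word 0)
    (hΔB : ∀ (i : ℕ) (l : List PTree),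
      Δ (word {PTree.node i l}) =
        word {PTree.node i l} ⊗ₜ[ℚ] word 0 + word 0 ⊗ₜ[ℚ] word {PTree.node i l} +
          TensorProduct.map LinearMap.id (B i)
            (TensorProduct.map P1 LinearMap.id (Δ (word (l : Multiset PTree)))))
    (hΔm : ∀ X Y : Word, Δ (word X * word Y) = Δ (word X) * Δ (word Y)) :
    ∀ m : Word,
      Δ (word m) = ((cutsW m).map fun p => word p.1 ⊗ₜ[ℚ] word p.2).sum := by

  have key : ∀ n : ℕ,
      (∀ t : PTree, sizeT t ≤ n →
        Δ (word {t}) = ((cutsTree t).map fun p => word p.1 ⊗ₜ[ℚ] word p.2).sum) ∧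
      (∀ l : List PTree, sizeF l ≤ n →
        Δ (word (l : Multiset PTree)) =
          ((cutsForest l).map fun p => word p.1 ⊗ₜ[ℚ] word p.2).sum) := by
    intro n
    induction n with
    | zero =>
      constructor
      · intro t ht
        exact absurd (le_trans (one_le_sizeT t) ht) (by omega)
      · intro l hl
        cases l with
        | nil =>
          rw [cutsForest]
          simpa using hΔe
        | cons t ts =>
          exfalso
          rw [sizeF] at hl
          have := one_le_sizeT t
          omega
    | succ n ih =>
      have treecase : ∀ t : PTree, sizeT t ≤ n + 1 →
          Δ (word {t}) = ((cutsTree t).map fun p => word p.1 ⊗ₜ[ℚ] word p.2).sum := by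
        intro t ht
        cases t with
        | node i l =>
          have hl : sizeF l ≤ n := by rw [sizeT] at ht; omega
          rw [hΔB i l, ih.2 l hl, cutsTree]
          simp only [Multiset.map_cons, Multiset.sum_cons, Multiset.map_map,
            Function.comp_apply]
          rw [map_multiset_sum, Multiset.map_map, map_multiset_sum, Multiset.map_map]
          simp only [Function.comp_def, TensorProduct.map_tmul, LinearMap.id_apply,
            B_word]
          rw [add_assoc]
          congr 1
          congr 1
          rw [msum_filter (cutsForest l) (fun p => p.1 ≠ 0)
            (fun p => P1 (word p.1) ⊗ₜ[ℚ] word {PTree.node i p.2.toList}) ?_]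
          · apply congrArg
            apply Multiset.map_congr rfl
            intro p hp
            rw [P1_word, if_neg (Multiset.mem_filter.mp hp).2]
          · intro p _ hnp
            simp only [ne_eq, not_not] at hnp
            rw [P1_word, if_pos hnp, TensorProduct.zero_tmul]
      refine ⟨treecase, ?_⟩
      intro l
      induction l with
      | nil =>
        intro _
        rw [cutsForest]
        simpa using hΔe
      | cons t ts ihts =>
        intro hl
        rw [sizeF] at hl
        have hts : sizeF ts ≤ n + 1 := by have := one_le_sizeT t; omega
        have ht : sizeT t ≤ n + 1 := by omega
        have hcoe : ((t :: ts : List PTree) : Multiset PTree) = {t} + (ts : Multiset PTree) := by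
          simp [Multiset.cons_coe, Multiset.singleton_add]
        rw [hcoe, ← word_mul, hΔm, treecase t ht, ihts hts, msum_mul_msum, cutsForest]
        rw [Multiset.map_bind]
        apply congrArg
        apply Multiset.bind_congr
        intro p _
        rw [Multiset.map_map]
        apply Multiset.map_congr rfl
        intro q _
        simp only [Function.comp_apply, Algebra.TensorProduct.tmul_mul_tmul, word_mul]
  intro m
  have h := (key (sizeF m.toList)).2 m.toList le_rfl
  rw [cutsW]
  have hm : ((m.toList : List PTree) : Multiset PTree) = m := Multiset.coe_toList m
  conv_lhs => rw [← hm]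
  exact h
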